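/- Fix integers l ≤ u with N = u − l + 1 ≥ 1, and σ > 0. Then lim_{x→0⁺} φ_σ(x) / ( (1/(2N)) · Σ_{i=0}^{u−l} [φ_σ((2(u−l)−2i+1)x) + φ_σ((2i+1)x)] ) = 1/N, where φ_σ(ζ) = (2/√(2π)) ∫₀^{ζ/(2σ)} e^{−t²/2} dt. -/

import Mathlib

/-!
φ_σ vanishes at 0 and is differentiable there with derivative c = 2 / (√(2π) · 2σ) ≠ 0.
The denominator D(x) vanishes at 0 as well, and its derivative there is
(1/(2N)) Σᵢ c · ((2(u−l) − 2i + 1) + (2i + 1)) = (1/(2N)) · N · 2N · c = N c.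
A first-order L'Hôpital rule at a point (a quotient of slopes) gives φ_σ(x) / D(x) → c / (N c) = 1/N.
-/

noncomputable def phi (σ ζ : ℝ) : ℝ :=
  (2 / Real.sqrt (2 * Real.pi)) * ∫ t in (0:ℝ)..(ζ / (2 * σ)), Real.exp (-t ^ 2 / 2)

open Filter Topology

theorem tendsto_div_of_hasDerivAt_of_eq_zero {𝕜 : Type*} [NontriviallyNormedField 𝕜]
    {f g : 𝕜 → 𝕜} {f' g' a : 𝕜} (hf : HasDerivAt f f' a) (hg : HasDerivAt g g' a)
    (hfa : f a = 0) (hga : g a = 0) (hg' : g' ≠ 0) :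
    Tendsto (fun x => f x / g x) (𝓝[≠] a) (𝓝 (f' / g')) := by
  have hslope := (hasDerivAt_iff_tendsto_slope.mp hf).div (hasDerivAt_iff_tendsto_slope.mp hg) hg'
  refine hslope.congr' ?_
  filter_upwards [self_mem_nhdsWithin] with x hx
  have hxa : x - a ≠ 0 := sub_ne_zero.mpr hx
  simp only [Pi.div_apply, slope_def_field, hfa, hga, sub_zero]
  exact div_div_div_cancel_right₀ hxa _ _

theorem phi_zero (σ : ℝ) : phi σ 0 = 0 := by
  rw [phi, zero_div, intervalIntegral.integral_same, mul_zero]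

theorem hasDerivAt_phi (σ ζ : ℝ) :
    HasDerivAt (phi σ)
      (2 / Real.sqrt (2 * Real.pi) * (Real.exp (-(ζ / (2 * σ)) ^ 2 / 2) * (1 / (2 * σ)))) ζ := by
  have hcont : Continuous fun t : ℝ => Real.exp (-t ^ 2 / 2) := by fun_prop
  have hint : HasDerivAt (fun y : ℝ => ∫ t in (0:ℝ)..y, Real.exp (-t ^ 2 / 2))
      (Real.exp (-(ζ / (2 * σ)) ^ 2 / 2)) (ζ / (2 * σ)) :=
    intervalIntegral.integral_hasDerivAt_right (hcont.intervalIntegrable _ _)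
      hcont.stronglyMeasurable.stronglyMeasurableAtFilter hcont.continuousAt
  exact (hint.comp ζ ((hasDerivAt_id ζ).div_const (2 * σ))).const_mul _

theorem hasDerivAt_phi_zero (σ : ℝ) :
    HasDerivAt (phi σ) (2 / Real.sqrt (2 * Real.pi) / (2 * σ)) 0 := by
  simpa [div_eq_mul_inv] using hasDerivAt_phi σ 0

theorem hasDerivAt_phi_const_mul_zero (σ a : ℝ) :
    HasDerivAt (fun x => phi σ (a * x)) (2 / Real.sqrt (2 * Real.pi) / (2 * σ) * a) 0 :=
  (hasDerivAt_phi_zero σ).comp_of_eq 0 ((hasDerivAt_id 0).const_mul a) (mul_zero a).symm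
    |>.congr_deriv (by ring)

theorem hasDerivAt_phi_mirror_sum_zero (σ : ℝ) (m : ℕ) :
    HasDerivAt (fun x => ∑ i ∈ Finset.range (m + 1),
        (phi σ ((2 * (m : ℝ) - 2 * i + 1) * x) + phi σ ((2 * (i : ℝ) + 1) * x)))
      (2 * ((m : ℝ) + 1) ^ 2 * (2 / Real.sqrt (2 * Real.pi) / (2 * σ))) 0 := by
  refine (HasDerivAt.fun_sum fun i _ => (hasDerivAt_phi_const_mul_zero σ _).add
    (hasDerivAt_phi_const_mul_zero σ _)).congr_deriv ?_
  simp only [← mul_add, show ∀ i : ℕ, 2 * (m : ℝ) - 2 * i + 1 + (2 * i + 1) = 2 * (m + 1) from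
    fun i => by ring, Finset.sum_const, Finset.card_range, nsmul_eq_mul, Nat.cast_add_one]
  ring

theorem stmt18 (l u : ℤ) (hlu : l ≤ u) (σ : ℝ) (hσ : 0 < σ) :
    Filter.Tendsto
      (fun x : ℝ => phi σ x /
        ((1 / (2 * ((u : ℝ) - l + 1))) *
          ∑ i ∈ Finset.range ((u - l).toNat + 1),
            (phi σ ((2 * ((u : ℝ) - l) - 2 * i + 1) * x) + phi σ ((2 * (i : ℝ) + 1) * x))))
      (nhdsWithin 0 (Set.Ioi 0)) (nhds (1 / ((u : ℝ) - l + 1))) := by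
  have hm : (u : ℝ) - l = ((u - l).toNat : ℕ) := by
    rw [← Int.cast_natCast, Int.toNat_of_nonneg (sub_nonneg.mpr hlu), Int.cast_sub]
  rw [hm]
  generalize (u - l).toNat = m
  set c := 2 / Real.sqrt (2 * Real.pi) / (2 * σ)
  have hc : 0 < c := by positivity
  have hlim := tendsto_div_of_hasDerivAt_of_eq_zero (hasDerivAt_phi_zero σ)
    ((hasDerivAt_phi_mirror_sum_zero σ m).const_mul (1 / (2 * ((m : ℝ) + 1))))
    (phi_zero σ) (by simp [phi_zero]) (by positivity)
  rw [show c / (1 / (2 * ((m : ℝ) + 1)) * (2 * ((m : ℝ) + 1) ^ 2 * c)) = 1 / (m + 1) by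
    field_simp] at hlim
  exact hlim.mono_left (nhdsWithin_mono 0 fun x hx => ne_of_gt hx)
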